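/- Let Σ be a finite alphabet, n ≥ 1, let # be a letter not in Σ, and let L ⊆ (Σ*)^n be an n-regular language. Let θ_# : (Σ*)^n → (Σ ∪ {#})* be the map (w_1, w_2, ..., w_n) ↦ w_1 # w_2 # ⋯ # w_n that inserts the separator # between consecutive coordinates. Then θ_#(L) ⊆ (Σ ∪ {#})* is an EDT0L language. -/

import Mathlib

open scoped Pointwise

/-- Rational subsets of a monoid: the smallest collection of subsets containing all
finite subsets and closed under binary union, elementwise product, and generated submonoid. -/
inductive IsRationalSet {M : Type*} [Monoid M] : Set M → Prop
  | finite (S : Set M) : S.Finite → IsRationalSet S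
  | union (S T : Set M) : IsRationalSet S → IsRationalSet T → IsRationalSet (S ∪ T)
  | mul (S T : Set M) : IsRationalSet S → IsRationalSet T → IsRationalSet (S * T)
  | star (S : Set M) : IsRationalSet S → IsRationalSet (Submonoid.closure S : Set M)

/-- A subset of a commutative additive monoid is linear if it is `a + B*` for a finite `B`. -/
def IsLinearSet' {M : Type*} [AddCommMonoid M] (X : Set M) : Prop :=
  ∃ (a : M) (B : Set M), B.Finite ∧ X = (a + ·) '' (AddSubmonoid.closure B : Set M)

/-- A semilinear set is a finite union of linear sets. -/
def IsSemilinearSet' {M : Type*} [AddCommMonoid M] (X : Set M) : Prop :=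
  ∃ (n : ℕ) (f : Fin n → Set M), (∀ i, IsLinearSet' (f i)) ∧ X = ⋃ i, f i

/-- Elementary regions in `ℤ^k`. -/
def IsElementaryRegion {k : ℕ} (E : Set (Fin k → ℤ)) : Prop :=
  (∃ (u : Fin k → ℤ) (a : ℤ), E = {z | ∑ i, u i * z i = a}) ∨
  (∃ (u : Fin k → ℤ) (a b : ℤ), 0 < b ∧ E = {z | Int.ModEq b (∑ i, u i * z i) a}) ∨
  (∃ (u : Fin k → ℤ) (a : ℤ), E = {z | a < ∑ i, u i * z i})

/-- A basic polyhedral set is a finite intersection of elementary regions. -/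
def IsBasicPolyhedral {k : ℕ} (X : Set (Fin k → ℤ)) : Prop :=
  ∃ (n : ℕ) (f : Fin n → Set (Fin k → ℤ)), (∀ i, IsElementaryRegion (f i)) ∧ X = ⋂ i, f i

/-- A polyhedral set is a finite union of basic polyhedral sets. -/
def IsPolyhedral {k : ℕ} (X : Set (Fin k → ℤ)) : Prop :=
  ∃ (n : ℕ) (f : Fin n → Set (Fin k → ℤ)), (∀ i, IsBasicPolyhedral (f i)) ∧ X = ⋃ i, f i

/-- A subset of `ℤ^k` is monotone if it lies in a single orthant `Q_I`. -/
def IsMonotoneSet {k : ℕ} (X : Set (Fin k → ℤ)) : Prop :=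
  ∃ I : Set (Fin k), ∀ z ∈ X, ∀ i : Fin k, (i ∈ I → 0 ≤ z i) ∧ (i ∉ I → z i < 0)

/-- A rational formal power series over `ℤ`. -/
def IsRationalSeries (S : PowerSeries ℤ) : Prop :=
  ∃ (p q : Polynomial ℤ), q ≠ 0 ∧ (q : PowerSeries ℤ) * S = (p : PowerSeries ℤ)

/-- A group is virtually abelian if it has an abelian subgroup of finite index. -/
def IsVirtuallyAbelian (G : Type*) [Group G] : Prop :=
  ∃ H : Subgroup G, H.FiniteIndex ∧ ∀ x ∈ H, ∀ y ∈ H, x * y = y * x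

/-- The word length of `g` with respect to the generating map `σ : S → G`. -/
noncomputable def wordLength {G : Type*} [Monoid G] {S : Type*} (σ : S → G) (g : G) : ℕ :=
  sInf {n | ∃ w : FreeMonoid S, FreeMonoid.lift σ w = g ∧ w.length = n}

/-- A language over the alphabet `A` is EDT0L if, for some finite extended alphabet `C ⊇ A`,
some start word `w ∈ C*`, and some rational control `R ⊆ End(C*)`, it equals `{φ(w) : φ ∈ R}`. -/
def IsEDT0L {A : Type} (L : Set (FreeMonoid A)) : Prop :=
  ∃ (C : Type) (_ : Fintype C) (emb : A ↪ C) (w : FreeMonoid C)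
    (R : Set (Monoid.End (FreeMonoid C))),
      IsRationalSet R ∧ (FreeMonoid.map (⇑emb)) '' L = (fun φ => φ w) '' R


theorem IsRationalSet.image {M N : Type*} [Monoid M] [Monoid N] (f : M →* N) {X : Set M}
    (h : IsRationalSet X) : IsRationalSet (f '' X) := by
  induction h with
  | finite S hS => exact .finite _ (hS.image f)
  | union S T _ _ ihS ihT => rw [Set.image_union]; exact .union _ _ ihS ihT
  | mul S T _ _ ihS ihT => rw [Set.image_mul]; exact .mul _ _ ihS ihT
  | star S _ ih =>
      have : f '' (Submonoid.closure S : Set M) = (Submonoid.closure (f '' S) : Set N) := by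
        rw [← MonoidHom.map_mclosure]; rfl
      rw [this]; exact .star _ ih

theorem map_intersperse' {α β : Type*} (f : α → β) (x : α) :
    ∀ l : List α, (List.intersperse x l).map f = List.intersperse (f x) (l.map f)
  | [] => by simp
  | [a] => by simp
  | a :: b :: t => by
      rw [List.intersperse_cons_cons, List.map_cons, List.map_cons, List.map_cons,
        List.map_cons, List.intersperse_cons_cons, map_intersperse' f x (b :: t), List.map_cons]

theorem prod_intersperse_cons {M : Type*} [Monoid M] (x a : M) (t : List M) :
    (List.intersperse x (a :: t)).prod = a * (t.map (fun b => x * b)).prod := by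
  induction t generalizing a with
  | nil => simp
  | cons b t ih => rw [List.intersperse_cons_cons]; simp [ih b, mul_assoc]

theorem prod_ofFn_sep {M : Type*} [Monoid M] (x : M) {m : ℕ} (v : Fin m → M) :
    (List.ofFn fun i => (if (i : ℕ) = 0 then 1 else x) * v i).prod
      = (List.intersperse x (List.ofFn v)).prod := by
  cases m with
  | zero => simp
  | succ m =>
    rw [List.ofFn_succ, List.ofFn_succ (f := v), prod_intersperse_cons, List.map_ofFn]
    simp [Function.comp_def]

theorem separator_image_EDT0L (S : Type) [Fintype S] (n : ℕ) (hn : 1 ≤ n)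
    (L : Set (Fin n → FreeMonoid S)) (hL : IsRationalSet L) :
    IsEDT0L ((fun u : Fin n → FreeMonoid S =>
      (List.intersperse (FreeMonoid.of (Sum.inr () : S ⊕ Unit))
        (List.ofFn fun i => FreeMonoid.map (Sum.inl : S → S ⊕ Unit) (u i))).prod) '' L) := by
  classical
  set C := Sum S (Option (Fin n)) with hC
  -- the endomorphism associated to a tuple u
  let ef : (Fin n → FreeMonoid S) → C → FreeMonoid C := fun u c =>
    match c with
    | Sum.inl s => FreeMonoid.of (Sum.inl s)
    | Sum.inr none => FreeMonoid.of (Sum.inr none)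
    | Sum.inr (some i) => FreeMonoid.of (Sum.inr (some i)) * FreeMonoid.map Sum.inl (u i)
  let Ef : (Fin n → FreeMonoid S) → Monoid.End (FreeMonoid C) := fun u => FreeMonoid.lift (ef u)
  have Ef_fix : ∀ u (v : FreeMonoid S),
      Ef u (FreeMonoid.map Sum.inl v) = FreeMonoid.map (Sum.inl : S → C) v := by
    intro u v
    have h : (Ef u : FreeMonoid C →* FreeMonoid C).comp (FreeMonoid.map Sum.inl)
        = FreeMonoid.map (Sum.inl : S → C) :=
      FreeMonoid.hom_eq fun s => by simp [Ef, ef]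
    exact DFunLike.congr_fun h v
  let Ehom : (Fin n → FreeMonoid S) →* Monoid.End (FreeMonoid C) :=
  { toFun := Ef
    map_one' := FreeMonoid.hom_eq fun c => by
      rcases c with s | (_ | i)
      · rfl
      · rfl
      · show FreeMonoid.of (Sum.inr (some i) : C)
            * FreeMonoid.map Sum.inl (1 : FreeMonoid S) = FreeMonoid.of (Sum.inr (some i))
        rw [map_one, mul_one]
    map_mul' := fun u v => FreeMonoid.hom_eq fun c => by
      rcases c with s | (_ | i)
      · rfl
      · rfl
      · show FreeMonoid.of (Sum.inr (some i) : C) * FreeMonoid.map Sum.inl (u i * v i)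
            = Ef u (FreeMonoid.of (Sum.inr (some i)) * FreeMonoid.map Sum.inl (v i))
        rw [map_mul, map_mul (Ef u), Ef_fix,
          show (Ef u) (FreeMonoid.of (Sum.inr (some i) : C))
            = FreeMonoid.of (Sum.inr (some i)) * FreeMonoid.map Sum.inl (u i) from rfl, mul_assoc] }
  let k : Monoid.End (FreeMonoid C) := FreeMonoid.lift (fun c =>
    match c with
    | Sum.inl s => FreeMonoid.of (Sum.inl s)
    | Sum.inr none => FreeMonoid.of (Sum.inr none)
    | Sum.inr (some i) => if (i : ℕ) = 0 then 1 else FreeMonoid.of (Sum.inr none))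
  have k_fix : ∀ v : FreeMonoid S,
      k (FreeMonoid.map Sum.inl v) = FreeMonoid.map (Sum.inl : S → C) v := by
    intro v
    have h : (k : FreeMonoid C →* FreeMonoid C).comp (FreeMonoid.map Sum.inl)
        = FreeMonoid.map (Sum.inl : S → C) :=
      FreeMonoid.hom_eq fun s => by simp [k]
    exact DFunLike.congr_fun h v
  let w : FreeMonoid C := (List.ofFn fun i : Fin n => FreeMonoid.of (Sum.inr (some i))).prod
  have hemb : Function.Injective (Sum.map (id : S → S) fun _ : Unit => (none : Option (Fin n))) :=
    Function.injective_id.sumMap fun a b _ => Subsingleton.elim a b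
  let embf : (S ⊕ Unit) ↪ C := ⟨Sum.map id fun _ => none, hemb⟩
  refine ⟨C, inferInstance, embf, w, {k} * (Ehom '' L),
    IsRationalSet.mul _ _ (.finite _ (Set.finite_singleton k)) (hL.image Ehom), ?_⟩
  rw [Set.singleton_mul, Set.image_image, Set.image_image, Set.image_image]
  refine Set.image_congr fun u _ => ?_
  -- compute both sides
  have h1 : Ef u w = (List.ofFn fun i : Fin n =>
      FreeMonoid.of (Sum.inr (some i) : C) * FreeMonoid.map Sum.inl (u i)).prod := by
    rw [show (Ef u) w = (Ef u : FreeMonoid C →* FreeMonoid C) w from rfl, map_list_prod,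
      List.map_ofFn]
    congr 1
  have h2 : k (Ef u w) = (List.ofFn fun i : Fin n =>
      (if (i : ℕ) = 0 then 1 else FreeMonoid.of (Sum.inr none : C))
        * FreeMonoid.map Sum.inl (u i)).prod := by
    rw [h1, show k ((List.ofFn _).prod) = (k : FreeMonoid C →* FreeMonoid C) _ from rfl,
      map_list_prod, List.map_ofFn]
    congr 1
    exact congrArg List.ofFn (funext fun i => by
      simp only [Function.comp_apply, map_mul, k_fix,
        show k (FreeMonoid.of (Sum.inr (some i) : C))
          = (if (i : ℕ) = 0 then 1 else FreeMonoid.of (Sum.inr none : C)) from rfl])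
  have hm : ∀ v : FreeMonoid S,
      FreeMonoid.map (⇑embf) (FreeMonoid.map Sum.inl v) = FreeMonoid.map (Sum.inl : S → C) v := by
    intro v
    have h : (FreeMonoid.map (⇑embf)).comp
        (FreeMonoid.map (Sum.inl : S → S ⊕ Unit)) = FreeMonoid.map (Sum.inl : S → C) :=
      FreeMonoid.hom_eq fun s => rfl
    exact DFunLike.congr_fun h v
  show _ = (k * Ef u) w
  rw [show (k * Ef u) w = k (Ef u w) from rfl, h2, map_list_prod, map_intersperse',
    List.map_ofFn]
  have : (⇑(FreeMonoid.map (⇑embf))) ∘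
      (fun i => FreeMonoid.map (Sum.inl : S → S ⊕ Unit) (u i))
      = fun i : Fin n => FreeMonoid.map (Sum.inl : S → C) (u i) := funext fun i => hm (u i)
  rw [this, FreeMonoid.map_of, ← prod_ofFn_sep]
  rfl
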